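/- arXiv:1304.5056 — 2 statements merged into one kernel-verified Lean document; each statement's English description precedes it below -/
import Mathlib

section
/- Let j ≥ 1 be a fixed positive integer and let (j_1,…,j_5), (i_1,…,i_5) ∈ 𝒜̃_5^{c,j} with the multisets {j_1,…,j_5} and {i_1,…,i_5} different. Then ∫ g_{j_1}g_{j_2}g_{j_3}g_{j_4}g_{j_5} · conj(g_{i_1}g_{i_2}g_{i_3}g_{i_4}g_{i_5}) dp = 0. -/
/-!
Write the integrand as `∏_{m ∈ E} g_m` for the multiset `E = {j_k} + {-i_k}`, using
`conj g_m = g_{-m}`. Rotating the coordinates `(h_N, l_N)` by a quarter turn preserves the joint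
law of the `h_n, l_n` and multiplies `g_N` by `i` and `g_{-N}` by `-i`, hence the integrand by
`i ^ (a - b)`, where `a` and `b` count `N` and `-N` in `E`. So the integral vanishes as soon as
`4 ∤ a - b` for some `N > 0`.

Such an `N` exists. Removing the pair `j, -j` from both tuples leaves zero-sum triples
`R ≠ R'` of nonzero integers, and `a - b` is the signed count of `N` in `M = R + (-R')`.
If all signed counts of `M` were multiples of `4`, a nonzero one would use at least four of the
six elements of `M`, and the at most two others cannot balance its contribution to `∑ M = 0`;
so they all vanish. But a zero-sum triple of nonzero integers contains no pair `n, -n`, so it is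
determined by its signed counts, and `R = R'`.
-/

open MeasureTheory ProbabilityTheory

/-- The family `(g_n)_{n ∈ ℤ \ {0}}` of centered complex Gaussian random
variables from the paper: `g_n = c (h_n + i l_n)` for `n > 0`, where
`(h_n)_{n>0}` and `(l_n)_{n>0}` are mutually independent standard real
Gaussians `N(0,1)`, and `g_{-n} = conj (g_n)` for `n > 0`. -/
structure GaussianData (Ω : Type*) [MeasurableSpace Ω] (p : Measure Ω) where
  c : ℝ
  c_pos : 0 < c
  h : ℤ → Ω → ℝ
  l : ℤ → Ω → ℝ
  g : ℤ → Ω → ℂ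
  g_def : ∀ n : ℤ, 0 < n → ∀ ω, g n ω = (c : ℂ) * ((h n ω : ℂ) + Complex.I * (l n ω : ℂ))
  g_neg : ∀ n : ℤ, 0 < n → ∀ ω, g (-n) ω = starRingEnd ℂ (g n ω)
  h_meas : ∀ n : ℤ, 0 < n → Measurable (h n)
  l_meas : ∀ n : ℤ, 0 < n → Measurable (l n)
  h_law : ∀ n : ℤ, 0 < n → p.map (h n) = gaussianReal 0 1
  l_law : ∀ n : ℤ, 0 < n → p.map (l n) = gaussianReal 0 1
  indep : iIndepFun (m := fun _ => (inferInstance : MeasurableSpace ℝ))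
      (fun nb : {n : ℤ // 0 < n} × Bool => if nb.2 then l nb.1.1 else h nb.1.1) p

open Complex ComplexConjugate Multiset

namespace Multiset

def signedCount (M : Multiset ℤ) (n : ℤ) : ℤ := M.count n - M.count (-n)

lemma signedCount_neg (M : Multiset ℤ) (n : ℤ) : signedCount M (-n) = -signedCount M n := by
  simp only [signedCount, neg_neg]
  ring

lemma signedCount_add (M M' : Multiset ℤ) (n : ℤ) :
    signedCount (M + M') n = signedCount M n + signedCount M' n := by
  simp only [signedCount, count_add]
  push_cast
  ring

lemma count_map_neg (M : Multiset ℤ) (n : ℤ) : (M.map Neg.neg).count n = M.count (-n) := by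
  simpa using count_map_eq_count' Neg.neg M neg_injective (-n)

lemma signedCount_map_neg (M : Multiset ℤ) (n : ℤ) :
    signedCount (M.map Neg.neg) n = -signedCount M n := by
  simp only [signedCount, count_map_neg, neg_neg]
  ring

lemma signedCount_cons_cons (a : ℤ) (M : Multiset ℤ) (n : ℤ) :
    signedCount (a ::ₘ -a ::ₘ M) n = signedCount M n := by
  simp only [signedCount, count_cons]
  push_cast
  split_ifs <;> omega

lemma sum_eq_zero_of_signedCount_eq_zero {M : Multiset ℤ} (h : ∀ n, signedCount M n = 0) :
    M.sum = 0 := by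
  have hsymm : M.map Neg.neg = M := ext.mpr fun n => by
    have := h n
    rw [count_map_neg]
    unfold signedCount at this
    omega
  have : M.sum = -M.sum := by rw [← sum_map_neg', hsymm]
  linarith

lemma signedCount_eq_zero_of_card_lt_four {M : Multiset ℤ} (hcard : card M < 4)
    (h4 : ∀ n, 4 ∣ signedCount M n) (n : ℤ) : signedCount M n = 0 := by
  have := count_le_card n M
  have := count_le_card (-n) M
  have := h4 n
  unfold signedCount at *
  omega

lemma signedCount_eq_zero_of_four_dvd {M : Multiset ℤ} (hcard : card M ≤ 7) (hsum : M.sum = 0)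
    (h4 : ∀ n, 4 ∣ signedCount M n) (n : ℤ) : signedCount M n = 0 := by
  by_contra hn
  have hn0 : n ≠ 0 := by
    rintro rfl
    simp [signedCount] at hn
  set B := M.filter fun m => ¬(m = n ∨ m = -n)
  have hcountB : ∀ m, B.count m = if m = n ∨ m = -n then 0 else M.count m := by
    intro m
    rw [count_filter]
    split_ifs <;> tauto
  have hsplit : M = replicate (M.count n) n + replicate (M.count (-n)) (-n) + B := by
    ext m
    simp only [count_add, count_replicate, hcountB]
    split_ifs <;> subst_vars <;> omega
  have hB : ∀ m, signedCount B m = 0 := by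
    refine signedCount_eq_zero_of_card_lt_four ?_ fun m => ?_
    · have := congrArg card hsplit
      simp only [card_add, card_replicate] at this
      have := h4 n
      unfold signedCount at this hn
      omega
    · have hneg : (-m = n ∨ -m = -n) ↔ (m = n ∨ m = -n) := by omega
      simp only [signedCount, hcountB, hneg]
      split_ifs
      · simp
      · exact h4 m
  have := congrArg Multiset.sum hsplit
  rw [sum_add, sum_add, sum_replicate, sum_replicate, sum_eq_zero_of_signedCount_eq_zero hB,
    hsum] at this
  simp only [nsmul_eq_mul, smul_neg, add_zero] at this
  have hprod : signedCount M n * n = 0 := by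
    unfold signedCount
    linarith
  exact hn ((mul_eq_zero.mp hprod).resolve_right hn0)

lemma prod_map_coe_ofFn {α M : Type*} [CommMonoid M] {n : ℕ} (f : Fin n → α) (g : α → M) :
    ((List.ofFn f : Multiset α).map g).prod = ∏ k, g (f k) := by
  rw [map_coe, prod_coe, List.map_ofFn, List.prod_ofFn]
  rfl

/-- The multiset of an element of `𝒜_n`: `n` nonzero integers with sum zero. -/
structure IsZeroSum (n : ℕ) (M : Multiset ℤ) : Prop where
  card_eq : card M = n
  sum_eq_zero : M.sum = 0
  zero_notMem : (0 : ℤ) ∉ M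

namespace IsZeroSum

lemma of_ofFn {n : ℕ} {f : Fin n → ℤ} (h0 : ∀ k, f k ≠ 0) (hsum : ∑ k, f k = 0) :
    IsZeroSum n (List.ofFn f : Multiset ℤ) where
  card_eq := by simp
  sum_eq_zero := by simpa [List.sum_ofFn] using hsum
  zero_notMem := by simpa [List.mem_ofFn, eq_comm] using h0

lemma exists_eq_cons_cons {n : ℕ} {J : Multiset ℤ} (hJ : IsZeroSum (n + 2) J) {a : ℤ}
    (ha : a ∈ J) (ha' : -a ∈ J) : ∃ R, J = a ::ₘ -a ::ₘ R ∧ IsZeroSum n R := by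
  have ha0 : a ≠ 0 := fun h => hJ.zero_notMem (h ▸ ha)
  have ha'' : -a ∈ J.erase a := (mem_erase_of_ne (by omega)).mpr ha'
  have hJ' : J = a ::ₘ -a ::ₘ (J.erase a).erase (-a) := by rw [cons_erase ha'', cons_erase ha]
  refine ⟨_, hJ', ⟨?_, ?_, fun h => hJ.zero_notMem ?_⟩⟩
  · have := congrArg card hJ'
    simp only [card_cons, hJ.card_eq] at this
    omega
  · have := congrArg Multiset.sum hJ'
    simp only [sum_cons, hJ.sum_eq_zero] at this
    linarith
  · rw [hJ']
    exact mem_cons_of_mem (mem_cons_of_mem h)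

lemma count_eq_toNat_signedCount {R : Multiset ℤ} (hR : IsZeroSum 3 R) (n : ℤ) :
    R.count n = (signedCount R n).toNat := by
  obtain ⟨x, y, z, rfl⟩ := card_eq_three.mp hR.card_eq
  have h0 := hR.zero_notMem
  have hsum := hR.sum_eq_zero
  simp only [insert_eq_cons, mem_cons, mem_singleton, not_or, sum_cons, sum_singleton] at h0 hsum
  simp only [signedCount, insert_eq_cons, count_cons, count_singleton]
  split_ifs <;> omega

lemma eq_of_signedCount_eq {R R' : Multiset ℤ} (hR : IsZeroSum 3 R) (hR' : IsZeroSum 3 R')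
    (h : ∀ n, signedCount R n = signedCount R' n) : R = R' :=
  ext.mpr fun n => by
    rw [hR.count_eq_toNat_signedCount, hR'.count_eq_toNat_signedCount, h]

end IsZeroSum

lemma exists_pos_not_four_dvd_signedCount_of_isZeroSum_three {R R' : Multiset ℤ}
    (hR : IsZeroSum 3 R) (hR' : IsZeroSum 3 R') (hne : R ≠ R') :
    ∃ n, 0 < n ∧ ¬ 4 ∣ signedCount (R + R'.map Neg.neg) n := by
  by_contra! h
  have h4 : ∀ n, 4 ∣ signedCount (R + R'.map Neg.neg) n := by
    intro n
    rcases lt_trichotomy n 0 with hn | rfl | hn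
    · simpa [signedCount_neg] using h (-n) (by omega)
    · simp [signedCount]
    · exact h n hn
  have hcard : card (R + R'.map Neg.neg) ≤ 7 := by simp [hR.card_eq, hR'.card_eq]
  have hsum : (R + R'.map Neg.neg).sum = 0 := by
    simp [sum_map_neg', hR.sum_eq_zero, hR'.sum_eq_zero]
  refine hne (hR.eq_of_signedCount_eq hR' fun n => ?_)
  have := signedCount_eq_zero_of_four_dvd hcard hsum h4 n
  rw [signedCount_add, signedCount_map_neg] at this
  linarith

lemma exists_pos_not_four_dvd_signedCount_of_isZeroSum_five {J K : Multiset ℤ}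
    (hJ : IsZeroSum 5 J) (hK : IsZeroSum 5 K) {a : ℤ} (haJ : a ∈ J) (haJ' : -a ∈ J)
    (haK : a ∈ K) (haK' : -a ∈ K) (hne : J ≠ K) :
    ∃ n, 0 < n ∧ ¬ 4 ∣ signedCount (J + K.map Neg.neg) n := by
  obtain ⟨R, rfl, hR⟩ := hJ.exists_eq_cons_cons haJ haJ'
  obtain ⟨R', rfl, hR'⟩ := hK.exists_eq_cons_cons haK haK'
  obtain ⟨n, hn, h4⟩ :=
    exists_pos_not_four_dvd_signedCount_of_isZeroSum_three hR hR' fun h => hne (h ▸ rfl)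
  refine ⟨n, hn, ?_⟩
  rwa [signedCount_add, signedCount_map_neg, signedCount_cons_cons, signedCount_cons_cons,
    ← signedCount_map_neg, ← signedCount_add]

end Multiset

section QuarterTurn

variable {ι : Type*} [DecidableEq ι]

def quarterTurn (a b : ι) (x : ι → ℝ) : ι → ℝ :=
  fun i => if i = a then -x b else if i = b then x a else x i

lemma measurePreserving_quarterTurn {μ : Measure ℝ} [IsProbabilityMeasure μ]
    (hμ : μ.map Neg.neg = μ) (a b : ι) :
    MeasurePreserving (quarterTurn a b) (Measure.infinitePi fun _ => μ)
      (Measure.infinitePi fun _ => μ) := by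
  have hswap : MeasurePreserving (fun (x : ι → ℝ) i => x (Equiv.swap a b i))
      (Measure.infinitePi fun _ => μ) (Measure.infinitePi fun _ => μ) := by
    refine ⟨by fun_prop, ?_⟩
    convert Measure.infinitePi_map_piCongrLeft (fun _ => μ) (Equiv.swap a b) using 2
    ext x i
    rw [MeasurableEquiv.coe_piCongrLeft, Equiv.piCongrLeft_apply_eq_cast]
    simp
  have hneg : MeasurePreserving (fun (x : ι → ℝ) i => (if i = a then Neg.neg else id) (x i))
      (Measure.infinitePi fun _ => μ) (Measure.infinitePi fun _ => μ) := by
    have hmeas (i : ι) : Measurable (if i = a then Neg.neg else id : ℝ → ℝ) := by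
      split_ifs <;> fun_prop
    refine ⟨measurable_pi_lambda _ fun i => (hmeas i).comp (measurable_pi_apply i), ?_⟩
    rw [Measure.infinitePi_map_pi _ hmeas]
    congr 1
    ext1 i
    split_ifs
    · exact hμ
    · exact Measure.map_id
  convert hneg.comp hswap using 1
  ext x i
  simp only [quarterTurn, Function.comp_apply]
  split_ifs <;> simp_all [Equiv.swap_apply_of_ne_of_ne]

end QuarterTurn

lemma integral_eq_zero_of_comp_eq_mul {𝕜 E : Type*} [RCLike 𝕜] [MeasurableSpace E]
    {μ : Measure E} {ψ : E → E} (hψ : MeasurePreserving ψ μ μ) {F : E → 𝕜}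
    (hF : AEStronglyMeasurable F μ) {c : 𝕜} (hc : c ≠ 1) (hFψ : ∀ x, F (ψ x) = c * F x) :
    ∫ x, F x ∂μ = 0 := by
  have hinv : ∫ x, F x ∂μ = c * ∫ x, F x ∂μ := by
    calc ∫ x, F x ∂μ = ∫ x, F x ∂(μ.map ψ) := by rw [hψ.map_eq]
      _ = ∫ x, F (ψ x) ∂μ := integral_map hψ.aemeasurable (by rw [hψ.map_eq]; exact hF)
      _ = c * ∫ x, F x ∂μ := by simp_rw [hFψ]; exact integral_const_mul c F
  have : (1 - c) * ∫ x, F x ∂μ = 0 := by linear_combination hinv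
  exact (mul_eq_zero.mp this).resolve_left (sub_ne_zero.mpr hc.symm)

lemma I_pow_mul_neg_I_pow_ne_one {a b : ℕ} (h : ¬ (4 : ℤ) ∣ a - b) : I ^ a * (-I) ^ b ≠ 1 := by
  rw [← inv_I, inv_pow, ← div_eq_mul_inv, ← zpow_natCast, ← zpow_natCast, ← zpow_sub₀ I_ne_zero,
    Ne, isPrimitiveRoot_I.zpow_eq_one_iff_dvd]
  exact_mod_cast h

lemma prod_map_ite_I {N : ℤ} (hN : N ≠ 0) (E : Multiset ℤ) :
    (E.map fun m => if m = N then I else if m = -N then -I else 1).prod =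
      I ^ E.count N * (-I) ^ E.count (-N) := by
  induction E using Multiset.induction_on with
  | empty => simp
  | cons m E ih =>
    have hN' : N ≠ -N := by omega
    rw [map_cons, prod_cons, ih, count_cons, count_cons]
    by_cases h1 : m = N
    · simp only [h1, ↓reduceIte, pow_succ, hN'.symm, add_zero]
      ring
    by_cases h2 : m = -N
    · simp only [h2, hN'.symm, ↓reduceIte, neg_mul, hN', add_zero, pow_succ, mul_neg, neg_inj]
      ring
    simp [h1, h2, Ne.symm h1, Ne.symm h2]

/- A point `x` of `ℝ^({n > 0} × Bool)` carries the values of `h_n` at `(n, false)` and of `l_n`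
at `(n, true)`; `complexCoord x m` is then the value of `g_m / c`. -/

def posCoord (x : {n : ℤ // 0 < n} × Bool → ℝ) (n : {n : ℤ // 0 < n}) : ℂ :=
  x (n, false) + I * x (n, true)

def complexCoord (x : {n : ℤ // 0 < n} × Bool → ℝ) (m : ℤ) : ℂ :=
  if hm : 0 < m then posCoord x ⟨m, hm⟩
  else if hm : 0 < -m then conj (posCoord x ⟨-m, hm⟩)
  else 0

lemma measurable_complexCoord (m : ℤ) : Measurable fun x => complexCoord x m := by
  unfold complexCoord posCoord
  split_ifs <;> fun_prop

lemma posCoord_quarterTurn (N n : {n : ℤ // 0 < n}) (x : {n : ℤ // 0 < n} × Bool → ℝ) :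
    posCoord (quarterTurn (N, false) (N, true) x) n =
      (if n = N then I else 1) * posCoord x n := by
  by_cases h : n = N
  · subst h
    simp only [posCoord, quarterTurn, ↓reduceIte, ofReal_neg, Prod.mk.injEq, Bool.true_eq_false,
      and_false]
    linear_combination (-(x (n, true) : ℂ)) * I_sq
  · simp [posCoord, quarterTurn, h]

lemma complexCoord_quarterTurn (N : {n : ℤ // 0 < n}) (x : {n : ℤ // 0 < n} × Bool → ℝ)
    (m : ℤ) :
    complexCoord (quarterTurn (N, false) (N, true) x) m =
      (if m = N then I else if m = -N then -I else 1) * complexCoord x m := by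
  obtain ⟨N, hN⟩ := N
  unfold complexCoord
  split_ifs <;> simp_all [posCoord_quarterTurn, Subtype.ext_iff, neg_eq_iff_eq_neg]
  omega

lemma prod_map_complexCoord_quarterTurn (N : {n : ℤ // 0 < n})
    (x : {n : ℤ // 0 < n} × Bool → ℝ) (c : ℂ) (E : Multiset ℤ) :
    (E.map fun m => c * complexCoord (quarterTurn (N, false) (N, true) x) m).prod =
      I ^ E.count (N : ℤ) * (-I) ^ E.count (-(N : ℤ)) *
        (E.map fun m => c * complexCoord x m).prod := by
  simp_rw [complexCoord_quarterTurn, mul_left_comm c, prod_map_mul, prod_map_ite_I N.2.ne']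

namespace GaussianData

variable {Ω : Type*} [MeasurableSpace Ω] {p : Measure Ω} (G : GaussianData Ω p)

def coords (ω : Ω) : {n : ℤ // 0 < n} × Bool → ℝ :=
  fun nb => (if nb.2 then G.l nb.1.1 else G.h nb.1.1) ω

lemma measurable_coords : Measurable G.coords := by
  refine measurable_pi_lambda _ fun ⟨⟨n, hn⟩, b⟩ => ?_
  cases b
  · exact G.h_meas n hn
  · exact G.l_meas n hn

lemma map_coords : p.map G.coords = Measure.infinitePi fun _ => gaussianReal 0 1 := by
  refine (G.indep.map_fun_eq_infinitePi_map
    fun nb => (measurable_pi_apply nb).comp G.measurable_coords).trans ?_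
  congr 1
  ext1 ⟨⟨n, hn⟩, b⟩
  cases b
  · exact G.h_law n hn
  · exact G.l_law n hn

lemma g_eq_complexCoord {m : ℤ} (hm : m ≠ 0) (ω : Ω) :
    G.g m ω = G.c * complexCoord (G.coords ω) m := by
  rcases hm.lt_or_gt with hm | hm
  · have := G.g_neg (-m) (neg_pos.mpr hm) ω
    rw [neg_neg] at this
    simp [this, complexCoord, posCoord, coords, hm.not_gt, hm, G.g_def (-m) (neg_pos.mpr hm) ω]
  · simp [complexCoord, posCoord, coords, hm, G.g_def m hm ω]

lemma conj_g {m : ℤ} (hm : m ≠ 0) (ω : Ω) : conj (G.g m ω) = G.g (-m) ω := by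
  rcases hm.lt_or_gt with hm | hm
  · have := G.g_neg (-m) (neg_pos.mpr hm) ω
    rw [neg_neg] at this
    rw [this, conj_conj]
  · rw [G.g_neg m hm]

theorem integral_prod_eq_zero {E : Multiset ℤ} (hE : (0 : ℤ) ∉ E) {N : ℤ} (hN : 0 < N)
    (h4 : ¬ 4 ∣ signedCount E N) :
    ∫ ω, (E.map (G.g · ω)).prod ∂p = 0 := by
  set F : ({n : ℤ // 0 < n} × Bool → ℝ) → ℂ :=
    fun x => (E.map fun m => G.c * complexCoord x m).prod
  have hF : Measurable F := by
    have := (E.map fun m x => (G.c : ℂ) * complexCoord x m).measurable_fun_prod (by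
      simpa using fun m _ => (measurable_complexCoord m).const_mul _)
    simp_rw [Multiset.map_map] at this
    exact this
  have hFg : ∀ ω, (E.map (G.g · ω)).prod = F (G.coords ω) := fun ω =>
    congrArg Multiset.prod <| map_congr rfl fun m hm =>
      G.g_eq_complexCoord (ne_of_mem_of_not_mem hm hE) ω
  calc ∫ ω, (E.map (G.g · ω)).prod ∂p = ∫ ω, F (G.coords ω) ∂p := by simp_rw [hFg]
    _ = ∫ x, F x ∂(p.map G.coords) :=
      (integral_map G.measurable_coords.aemeasurable hF.aestronglyMeasurable).symm
    _ = 0 := by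
      rw [G.map_coords]
      refine integral_eq_zero_of_comp_eq_mul
        (measurePreserving_quarterTurn (by simpa using gaussianReal_map_neg (μ := 0) (v := 1)) _ _)
        hF.aestronglyMeasurable (I_pow_mul_neg_I_pow_ne_one h4)
        fun x => prod_map_complexCoord_quarterTurn ⟨N, hN⟩ x _ E

end GaussianData

theorem moment_tilde_A5c_same_j_orthogonal_general
    {Ω : Type*} [MeasurableSpace Ω] (p : Measure Ω)
    (G : GaussianData Ω p)
    (jv : ℤ)
    (jt it : Fin 5 → ℤ)
    (hjt0 : ∀ k, jt k ≠ 0) (hit0 : ∀ k, it k ≠ 0)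
    (hjtsum : ∑ k, jt k = 0) (hitsum : ∑ k, it k = 0)
    (hjtmem : ∃ l m : Fin 5, l ≠ m ∧ jt l = jv ∧ jt m = -jv)
    (hitmem : ∃ l m : Fin 5, l ≠ m ∧ it l = jv ∧ it m = -jv)
    (hne : (List.ofFn jt : Multiset ℤ) ≠ (List.ofFn it : Multiset ℤ)) :
    ∫ ω, (∏ k, G.g (jt k) ω) * starRingEnd ℂ (∏ k, G.g (it k) ω) ∂p = 0 := by
  set J : Multiset ℤ := ↑(List.ofFn jt)
  set K : Multiset ℤ := ↑(List.ofFn it)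
  have hJ : IsZeroSum 5 J := .of_ofFn hjt0 hjtsum
  have hK : IsZeroSum 5 K := .of_ofFn hit0 hitsum
  obtain ⟨l, m, -, hl, hm⟩ := hjtmem
  obtain ⟨l', m', -, hl', hm'⟩ := hitmem
  obtain ⟨N, hN, h4⟩ := exists_pos_not_four_dvd_signedCount_of_isZeroSum_five hJ hK
    (mem_coe.mpr (List.mem_ofFn.mpr ⟨l, hl⟩)) (mem_coe.mpr (List.mem_ofFn.mpr ⟨m, hm⟩))
    (mem_coe.mpr (List.mem_ofFn.mpr ⟨l', hl'⟩)) (mem_coe.mpr (List.mem_ofFn.mpr ⟨m', hm'⟩)) hne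
  have hE : (0 : ℤ) ∉ J + K.map Neg.neg := by
    simpa [mem_add, mem_map] using ⟨hJ.zero_notMem, hK.zero_notMem⟩
  have hintegrand : ∀ ω, (∏ k, G.g (jt k) ω) * conj (∏ k, G.g (it k) ω) =
      ((J + K.map Neg.neg).map (G.g · ω)).prod := fun ω => by
    rw [map_add, prod_add, map_map, prod_map_coe_ofFn, prod_map_coe_ofFn, map_prod]
    simp_rw [G.conj_g (hit0 _), Function.comp_apply]
  simp_rw [hintegrand]
  exact G.integral_prod_eq_zero hE hN h4

/-- Let `j ≥ 1` and `(j_1,…,j_5), (i_1,…,i_5) ∈ 𝒜̃_5^{c,j}`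
with different multisets `{j_1,…,j_5} ≠ {i_1,…,i_5}`.  Then the mixed moment
`∫ g_{j_1}⋯g_{j_5} conj(g_{i_1}⋯g_{i_5}) dp` vanishes. -/
theorem moment_tilde_A5c_same_j_orthogonal
    {Ω : Type*} [MeasurableSpace Ω] (p : Measure Ω) [IsProbabilityMeasure p]
    (G : GaussianData Ω p)
    (jv : ℤ) (hjv : 0 < jv)
    (jt it : Fin 5 → ℤ)
    (hjt0 : ∀ k, jt k ≠ 0) (hit0 : ∀ k, it k ≠ 0)
    (hjtsum : ∑ k, jt k = 0) (hitsum : ∑ k, it k = 0)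
    (hjtmem : ∃ l m : Fin 5, l ≠ m ∧ jt l = jv ∧ jt m = -jv)
    (hitmem : ∃ l m : Fin 5, l ≠ m ∧ it l = jv ∧ it m = -jv)
    (hne : (List.ofFn jt : Multiset ℤ) ≠ (List.ofFn it : Multiset ℤ)) :
    ∫ ω, (∏ k, G.g (jt k) ω) * starRingEnd ℂ (∏ k, G.g (it k) ω) ∂p = 0 :=
  moment_tilde_A5c_same_j_orthogonal_general p G jv jt it hjt0 hit0 hjtsum hitsum hjtmem hitmem hne
end

section
/- For every integer m ≥ 3 and every index l with 2 ≤ l ≤ m−1 there exists a constant C > 0 such that for every integer N ≥ 2, the sum over (m−1)-tuples of positive integers (j_1,…,j_{m−1}) with j_k ≤ N for all k and j_1 + ⋯ + j_{m−1} ≤ N of [1/(j_1 · j_l · ∏_{k=2, k≠l}^{m−1} j_k²)] · 1/(N − (j_1 + ⋯ + j_{m−1}) + 1) is at most C·ln N. -/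
/-! With the gap `t = N - ∑ j + 1`, AM–GM bounds `1 / (j_l t)` by `(1 / j_l² + 1 / t²) / 2`.
The `1 / t²` half is the same weight at the tuple with `j_l` replaced by `t`; this replacement
is injective on the summation range and keeps the tuple in the box `[1, N]^(m-1)`. So the sum is
at most the box sum of `1 / (j_1 ∏_{k ≥ 2} j_k²)`, which factors into a harmonic sum
`≤ 1 + ln N` times `m - 2` sums `∑ 1 / a² ≤ 2`. -/

open Finset

lemma sum_Icc_inv_le_one_add_log (N : ℕ) : ∑ a ∈ Icc 1 N, (a : ℝ)⁻¹ ≤ 1 + Real.log N := by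
  simpa [harmonic_eq_sum_Icc] using harmonic_le_one_add_log N

lemma sum_Icc_inv_sq_le_two (N : ℕ) : ∑ a ∈ Icc 1 N, ((a : ℝ) ^ 2)⁻¹ ≤ 2 := by
  have hIoo : Ioo 0 (N + 1) = Icc 1 N := by ext; simp only [mem_Ioo, mem_Icc]; omega
  simpa [hIoo] using sum_Ioo_inv_sq_le (α := ℝ) 0 (N + 1)

lemma sum_piFinset_Icc_inv_mul_prod_inv_sq_le {n : ℕ} (i : Fin n) (N : ℕ) :
    ∑ j ∈ Fintype.piFinset (fun _ : Fin n => Icc 1 N),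
      (j i : ℝ)⁻¹ * ∏ k ∈ univ.erase i, ((j k : ℝ) ^ 2)⁻¹
    ≤ (1 + Real.log N) * 2 ^ (n - 1) := by
  set g : Fin n → ℕ → ℝ := fun k a => if k = i then (a : ℝ)⁻¹ else ((a : ℝ) ^ 2)⁻¹
  calc ∑ j ∈ Fintype.piFinset (fun _ : Fin n => Icc 1 N),
        (j i : ℝ)⁻¹ * ∏ k ∈ univ.erase i, ((j k : ℝ) ^ 2)⁻¹
      = ∏ k, ∑ a ∈ Icc 1 N, g k a := by
        rw [prod_univ_sum]
        refine sum_congr rfl fun j _ => ?_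
        rw [← mul_prod_erase univ _ (mem_univ i)]
        refine congrArg₂ _ (if_pos rfl).symm (prod_congr rfl fun k hk => ?_)
        exact (if_neg (ne_of_mem_erase hk)).symm
    _ = (∑ a ∈ Icc 1 N, g i a) * ∏ k ∈ univ.erase i, ∑ a ∈ Icc 1 N, g k a :=
        (mul_prod_erase univ _ (mem_univ i)).symm
    _ ≤ (1 + Real.log N) * ∏ _k ∈ univ.erase i, (2 : ℝ) := by
        gcongr with k hk
        · simpa [g] using sum_Icc_inv_le_one_add_log N
        · simpa [g, ne_of_mem_erase hk] using sum_Icc_inv_sq_le_two N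
    _ = (1 + Real.log N) * 2 ^ (n - 1) := by simp [card_erase_of_mem]

lemma mul_inv_le_inv_sq_add_inv_sq_div_two (a t : ℝ) :
    a⁻¹ * t⁻¹ ≤ ((a ^ 2)⁻¹ + (t ^ 2)⁻¹) / 2 := by
  have := two_mul_le_add_sq a⁻¹ t⁻¹
  rw [← inv_pow, ← inv_pow]
  linarith

variable {n N : ℕ}

lemma sum_mul_inv_mul_inv_gap_le (i : Fin n) (c : (Fin n → ℕ) → ℝ) (hc₀ : ∀ j, 0 ≤ c j)
    (hc : ∀ j v, c (Function.update j i v) = c j) :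
    ∑ j ∈ (Fintype.piFinset fun _ : Fin n => Icc 1 N).filter (fun j => ∑ k, j k ≤ N),
      c j * ((j i : ℝ)⁻¹ * ((N : ℝ) - ((∑ k, j k : ℕ) : ℝ) + 1)⁻¹)
    ≤ ∑ j ∈ Fintype.piFinset fun _ : Fin n => Icc 1 N, c j * ((j i : ℝ) ^ 2)⁻¹ := by
  set B := Fintype.piFinset fun _ : Fin n => Icc 1 N
  set S := B.filter (fun j => ∑ k, j k ≤ N)
  set F : (Fin n → ℕ) → ℝ := fun j => c j * ((j i : ℝ) ^ 2)⁻¹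
  have hF : ∀ j, 0 ≤ F j := fun j => mul_nonneg (hc₀ j) (by positivity)
  set reflect : (Fin n → ℕ) → (Fin n → ℕ) := fun j => Function.update j i (N - ∑ k, j k + 1)
  have mem_S : ∀ {j}, j ∈ S → (∀ k, j k ∈ Icc 1 N) ∧ ∑ k, j k ≤ N := fun hj => by
    simpa [S, B, Fintype.mem_piFinset] using hj
  have sum_eq : ∀ j : Fin n → ℕ, ∑ k, j k = j i + ∑ k ∈ univ.erase i, j k := fun j =>
    (add_sum_erase _ _ (mem_univ i)).symm
  have reflect_term : ∀ j ∈ S,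
      c j * ((j i : ℝ)⁻¹ * ((N : ℝ) - ((∑ k, j k : ℕ) : ℝ) + 1)⁻¹)
        ≤ (F j + F (reflect j)) / 2 := by
    intro j hj
    have hcast : ((reflect j i : ℕ) : ℝ) = (N : ℝ) - ((∑ k, j k : ℕ) : ℝ) + 1 := by
      simp only [reflect, Function.update_self]
      push_cast [Nat.cast_sub (mem_S hj).2]
      ring
    have hcr : c (reflect j) = c j := hc j _
    simp only [F, hcr, hcast]
    rw [← mul_add, mul_div_assoc]
    exact mul_le_mul_of_nonneg_left (mul_inv_le_inv_sq_add_inv_sq_div_two _ _) (hc₀ j)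
  have reflect_mem : ∀ j ∈ S, reflect j ∈ B := by
    intro j hj
    obtain ⟨hbox, hsum⟩ := mem_S hj
    have hpos := (mem_Icc.mp (hbox i)).1
    simp only [B, Fintype.mem_piFinset]
    intro k
    rcases eq_or_ne k i with rfl | hk
    · simp only [reflect, Function.update_self, mem_Icc]
      rw [sum_eq j] at hsum ⊢
      omega
    · simpa [reflect, hk] using hbox k
  have reflect_injOn : Set.InjOn reflect S := by
    intro j hj j' hj' h
    have off : ∀ k ≠ i, j k = j' k := fun k hk => by
      simpa [reflect, hk] using congrFun h k
    have rest : ∑ k ∈ univ.erase i, j k = ∑ k ∈ univ.erase i, j' k :=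
      sum_congr rfl fun k hk => off k (ne_of_mem_erase hk)
    have at_i := congrFun h i
    simp only [reflect, Function.update_self] at at_i
    have hsum := (mem_S hj).2
    have hsum' := (mem_S hj').2
    funext k
    rcases eq_or_ne k i with rfl | hk
    · rw [sum_eq j] at at_i hsum
      rw [sum_eq j'] at at_i hsum'
      omega
    · exact off k hk
  calc _ ≤ ∑ j ∈ S, (F j + F (reflect j)) / 2 := sum_le_sum reflect_term
    _ = (∑ j ∈ S, F j + ∑ j ∈ S.image reflect, F j) / 2 := by
        rw [← sum_div, sum_add_distrib, sum_image reflect_injOn]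
    _ ≤ (∑ j ∈ B, F j + ∑ j ∈ B, F j) / 2 := by
        gcongr
        · exact fun j _ _ => hF j
        · exact filter_subset _ _
        · exact fun j _ _ => hF j
        · simpa only [image_subset_iff] using reflect_mem
    _ = ∑ j ∈ B, F j := by ring

lemma sum_tail_weight_le {i₀ i : Fin n} (hi : i ≠ i₀) :
    ∑ j ∈ (Fintype.piFinset fun _ : Fin n => Icc 1 N).filter (fun j => ∑ k, j k ≤ N),
      1 / ((j i₀ : ℝ) * (j i : ℝ) * ∏ k ∈ (univ.erase i₀).erase i, (j k : ℝ) ^ 2) *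
        (1 / ((N : ℝ) - ((∑ k, j k : ℕ) : ℝ) + 1))
    ≤ (1 + Real.log N) * 2 ^ (n - 1) := by
  set c : (Fin n → ℕ) → ℝ :=
    fun j => (j i₀ : ℝ)⁻¹ * ∏ k ∈ (univ.erase i₀).erase i, ((j k : ℝ) ^ 2)⁻¹
  have hc : ∀ j v, c (Function.update j i v) = c j := fun j v => by
    simp only [c, Function.update_of_ne hi.symm]
    congr 1
    exact prod_congr rfl fun k hk => by rw [Function.update_of_ne (ne_of_mem_erase hk)]
  calc _ = ∑ j ∈ (Fintype.piFinset fun _ : Fin n => Icc 1 N).filter (fun j => ∑ k, j k ≤ N),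
        c j * ((j i : ℝ)⁻¹ * ((N : ℝ) - ((∑ k, j k : ℕ) : ℝ) + 1)⁻¹) := by
        simp only [c, one_div, mul_inv, prod_inv_distrib]
        exact sum_congr rfl fun j _ => by ring
    _ ≤ ∑ j ∈ Fintype.piFinset fun _ : Fin n => Icc 1 N, c j * ((j i : ℝ) ^ 2)⁻¹ :=
        sum_mul_inv_mul_inv_gap_le i c (fun j => by positivity) hc
    _ = ∑ j ∈ Fintype.piFinset fun _ : Fin n => Icc 1 N,
          (j i₀ : ℝ)⁻¹ * ∏ k ∈ univ.erase i₀, ((j k : ℝ) ^ 2)⁻¹ :=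
        sum_congr rfl fun j _ => by
          rw [mul_assoc, mul_comm _ ((j i : ℝ) ^ 2)⁻¹,
            mul_prod_erase _ (fun k => ((j k : ℝ) ^ 2)⁻¹) (mem_erase.mpr ⟨hi, mem_univ i⟩)]
    _ ≤ (1 + Real.log N) * 2 ^ (n - 1) := sum_piFinset_Icc_inv_mul_prod_inv_sq_le i₀ N

/-- For every `m ≥ 3` and every index `l` with
`2 ≤ l ≤ m - 1` there is `C > 0` such that for every `N ≥ 2`, the sum over
`(m-1)`-tuples of positive integers `(j_1,…,j_{m-1})` with `j_k ≤ N` and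
`j_1 + ⋯ + j_{m-1} ≤ N` of
`(1/(j_1 j_l ∏_{k=2, k≠l}^{m-1} j_k²)) · 1/(N - (j_1 + ⋯ + j_{m-1}) + 1)`
is at most `C ln N`.  (Indices are `1`-based in the informal statement; here
`j_r` is `j ⟨r - 1, _⟩`.) -/
theorem sum_tail_weight_two_first_powers_le (m : ℕ) (hm : 3 ≤ m)
    (l : ℕ) (hl2 : 2 ≤ l) (hlm : l ≤ m - 1) :
    ∃ C : ℝ, 0 < C ∧ ∀ N : ℕ, 2 ≤ N →
      ∑ j ∈ (Fintype.piFinset (fun _ : Fin (m - 1) => Finset.Icc 1 N)).filter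
          (fun j => ∑ k, j k ≤ N),
        (1 / ((j ⟨0, by omega⟩ : ℝ) * (j ⟨l - 1, by omega⟩ : ℝ) *
            ∏ k ∈ Finset.univ.filter
              (fun k : Fin (m - 1) => 1 ≤ (k : ℕ) ∧ (k : ℕ) ≠ l - 1),
              ((j k : ℝ)) ^ 2)) *
          (1 / ((N : ℝ) - ((∑ k, j k : ℕ) : ℝ) + 1))
      ≤ C * Real.log N := by
  refine ⟨3 * 2 ^ (m - 2), by positivity, fun N hN => ?_⟩
  have hfilter : univ.filter (fun k : Fin (m - 1) => 1 ≤ (k : ℕ) ∧ (k : ℕ) ≠ l - 1)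
      = (univ.erase ⟨0, by omega⟩).erase ⟨l - 1, by omega⟩ := by
    ext k
    simp only [mem_filter, mem_univ, true_and, mem_erase, ne_eq, Fin.ext_iff, and_true]
    omega
  have hlog : 1 ≤ 2 * Real.log N := by
    have := Real.log_two_gt_d9
    have := Real.log_le_log two_pos (by exact_mod_cast hN : (2 : ℝ) ≤ N)
    linarith
  rw [hfilter]
  calc _ ≤ (1 + Real.log N) * 2 ^ (m - 1 - 1) :=
        sum_tail_weight_le (by simp only [ne_eq, Fin.ext_iff]; omega)
    _ ≤ 3 * 2 ^ (m - 2) * Real.log N := by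
        rw [show m - 1 - 1 = m - 2 by omega]
        nlinarith [pow_pos (two_pos : (0:ℝ) < 2) (m - 2)]
end
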